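/- arXiv:2005.00968 — 2 statements merged into one kernel-verified Lean document; each statement's English description precedes it below -/
import Mathlib

section
/- The first-order Marcum Q-function Q₁(a,b) is monotonically increasing in a for each fixed b ≥ 0; i.e., if 0 ≤ a₁ < a₂ then Q₁(a₁,b) ≤ Q₁(a₂,b), with strict inequality for b > 0. -/
open MeasureTheory Real Set

/-- Modified Bessel function of the first kind of order zero. -/
noncomputable def besselI0 (z : ℝ) : ℝ := ∑' k : ℕ, (z ^ 2 / 4) ^ k / ((Nat.factorial k : ℝ)) ^ 2

/-- Density of the noncentral chi-square distribution with 2 degrees of freedom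
and noncentrality parameter `x`, evaluated at `η`. -/
noncomputable def g (x η : ℝ) : ℝ :=
  (1 / 2) * Real.exp (-(x + η) / 2) * besselI0 (Real.sqrt (x * η))

/-- The Bayesian comparison function `f(x,y) = ∫∫_{η > ν ≥ 0} g_x(η) g_y(ν) dη dν`. -/
noncomputable def fcomp (x y : ℝ) : ℝ :=
  ∫ η in Set.Ioi (0 : ℝ), g x η * (∫ ν in (0 : ℝ)..η, g y ν)

/-- The first-order Marcum Q-function. -/
noncomputable def marcumQ1 (a b : ℝ) : ℝ :=
  ∫ t in Set.Ioi b, t * Real.exp (-(t ^ 2 + a ^ 2) / 2) * besselI0 (a * t)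

/-- The Laguerre polynomial of degree `m`. -/
noncomputable def laguerre (m : ℕ) (z : ℝ) : ℝ :=
  ∑ k ∈ Finset.range (m + 1), (Nat.choose m k : ℝ) * (-z) ^ k / (Nat.factorial k : ℝ)

/-!
Put `λ = a²/2` and `x = b²/2`. Expanding `I₀` termwise gives `Q₁(a,b) = ∑ₖ p_λ(k) F_x(k)`, where
`p_λ` is the Poisson(λ) mass function and `F_x` the Poisson(x) distribution function: the `k`-th
integral is `F_x(k)` because `d/du F_u(k) = -p_u(k)`. Summing over `{j ≤ k}` in the other order gives
`Q₁(a,b) = ∑ⱼ p_x(j) P(N_λ ≥ j)`, i.e. `Q₁ = P(N_x ≤ N_λ)` for independent Poisson variables.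
Each tail `P(N_λ ≥ j) = 1 - F_λ(j - 1)` increases with `λ`, strictly for `j ≥ 1`, and `p_x(1) > 0`
when `b > 0`.
-/

open Filter Topology

lemma tsum_mul_sum_range_eq_tsum_mul_tsum_add {u v : ℕ → ℝ} (hu : 0 ≤ u) (hv : 0 ≤ v)
    (hsu : Summable u) (hsv : Summable v) :
    ∑' k, u k * ∑ j ∈ Finset.range (k + 1), v j = ∑' j, v j * ∑' i, u (i + j) := by
  obtain ⟨F, hF⟩ : ∃ F : ℕ → ℕ → ℝ, ∀ j k, F j k = if j ≤ k then v j * u k else 0 :=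
    ⟨_, fun _ _ ↦ rfl⟩
  have hsF : Summable (Function.uncurry F) := by
    refine (hsv.mul_of_nonneg hsu hv hu).of_nonneg_of_le (fun p ↦ ?_) fun p ↦ ?_ <;>
      rw [Function.uncurry_apply_pair, hF] <;> split_ifs
    exacts [mul_nonneg (hv _) (hu _), le_rfl, le_rfl, mul_nonneg (hv _) (hu _)]
  have hsrow (j : ℕ) : Summable (F j) := hsF.prod_factor j
  have hcol (k : ℕ) : ∑' j, F j k = u k * ∑ j ∈ Finset.range (k + 1), v j := by
    rw [tsum_eq_sum (s := Finset.range (k + 1)), Finset.mul_sum]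
    · refine Finset.sum_congr rfl fun j hj ↦ ?_
      rw [hF, if_pos (Nat.lt_succ_iff.1 (Finset.mem_range.1 hj)), mul_comm]
    · intro j hj
      rw [hF, if_neg (by simpa [Nat.lt_succ_iff] using hj)]
  have hrow (j : ℕ) : ∑' k, F j k = v j * ∑' i, u (i + j) := by
    rw [← (hsrow j).sum_add_tsum_nat_add j, ← tsum_mul_left]
    rw [Finset.sum_eq_zero fun i hi ↦ (hF j i).trans (if_neg (by simpa using hi)), zero_add]
    exact tsum_congr fun i ↦ (hF j (i + j)).trans (if_pos (Nat.le_add_left j i))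
  simp_rw [← hcol, ← hrow]
  exact hsF.tsum_comm' hsrow fun k ↦ hsF.prod_symm.prod_factor k

noncomputable def poissonProb (l : ℝ) (k : ℕ) : ℝ := exp (-l) * l ^ k / k.factorial

noncomputable def poissonCDF (l : ℝ) (k : ℕ) : ℝ := ∑ j ∈ Finset.range (k + 1), poissonProb l j

noncomputable def poissonTail (l : ℝ) (j : ℕ) : ℝ := ∑' i, poissonProb l (i + j)

section Poisson

variable {l : ℝ}

lemma poissonProb_nonneg (hl : 0 ≤ l) (k : ℕ) : 0 ≤ poissonProb l k := by
  unfold poissonProb; positivity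

lemma poissonProb_pos (hl : 0 < l) (k : ℕ) : 0 < poissonProb l k := by
  unfold poissonProb; positivity

lemma hasSum_poissonProb (l : ℝ) : HasSum (poissonProb l) 1 := by
  have h := (NormedSpace.expSeries_div_hasSum_exp l).mul_left (exp (-l))
  rw [← Real.exp_eq_exp_ℝ, ← Real.exp_add, neg_add_cancel, Real.exp_zero] at h
  exact h.congr_fun fun k ↦ mul_div_assoc ..

lemma summable_poissonProb_mul (hl : 0 ≤ l) {c : ℕ → ℝ} (hc₀ : ∀ k, 0 ≤ c k)
    (hc₁ : ∀ k, c k ≤ 1) :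
    Summable fun k ↦ poissonProb l k * c k :=
  (hasSum_poissonProb l).summable.of_nonneg_of_le
    (fun k ↦ mul_nonneg (poissonProb_nonneg hl k) (hc₀ k))
    fun k ↦ mul_le_of_le_one_right (poissonProb_nonneg hl k) (hc₁ k)

lemma hasDerivAt_poissonProb_zero (l : ℝ) :
    HasDerivAt (poissonProb · 0) (-poissonProb l 0) l := by
  simpa [poissonProb] using (hasDerivAt_neg l).exp

lemma hasDerivAt_poissonProb_succ (k : ℕ) (l : ℝ) :
    HasDerivAt (poissonProb · (k + 1)) (poissonProb l k - poissonProb l (k + 1)) l := by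
  refine (((hasDerivAt_neg l).exp.fun_mul (hasDerivAt_pow (k + 1) l)).div_const
    ((k + 1).factorial : ℝ)).congr_deriv ?_
  rw [poissonProb, poissonProb, Nat.factorial_succ, Nat.add_sub_cancel]
  push_cast
  field_simp
  ring

lemma hasDerivAt_poissonCDF (k : ℕ) (l : ℝ) :
    HasDerivAt (poissonCDF · k) (-poissonProb l k) l := by
  induction k with
  | zero => simpa [poissonCDF] using hasDerivAt_poissonProb_zero l
  | succ k ih =>
    simp only [poissonCDF, Finset.sum_range_succ _ (k + 1)] at ih ⊢
    exact (ih.fun_add (hasDerivAt_poissonProb_succ k l)).congr_deriv (by ring)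

lemma strictAntiOn_poissonCDF (k : ℕ) : StrictAntiOn (poissonCDF · k) (Ici 0) := by
  refine strictAntiOn_of_deriv_neg (convex_Ici 0)
    (fun l _ ↦ (hasDerivAt_poissonCDF k l).continuousAt.continuousWithinAt) fun l hl ↦ ?_
  rw [interior_Ici] at hl
  rw [(hasDerivAt_poissonCDF k l).deriv]
  exact neg_lt_zero.2 (poissonProb_pos hl k)

lemma tendsto_poissonCDF_atTop (k : ℕ) : Tendsto (poissonCDF · k) atTop (𝓝 0) := by
  have hprob (j : ℕ) : Tendsto (poissonProb · j) atTop (𝓝 0) := by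
    simpa [poissonProb, mul_comm] using
      (tendsto_pow_mul_exp_neg_atTop_nhds_zero j).div_const (j.factorial : ℝ)
  simpa [poissonCDF] using tendsto_finsetSum (Finset.range (k + 1)) fun j _ ↦ hprob j

lemma poissonTail_eq (l : ℝ) (j : ℕ) :
    poissonTail l j = 1 - ∑ i ∈ Finset.range j, poissonProb l i := by
  have h := (hasSum_poissonProb l).summable.sum_add_tsum_nat_add j
  rw [(hasSum_poissonProb l).tsum_eq] at h
  rw [poissonTail]
  linarith

lemma poissonTail_succ (l : ℝ) (k : ℕ) : poissonTail l (k + 1) = 1 - poissonCDF l k :=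
  poissonTail_eq l (k + 1)

lemma poissonTail_nonneg (hl : 0 ≤ l) (j : ℕ) : 0 ≤ poissonTail l j :=
  tsum_nonneg fun i ↦ poissonProb_nonneg hl (i + j)

lemma poissonTail_le_one (hl : 0 ≤ l) (j : ℕ) : poissonTail l j ≤ 1 := by
  rw [poissonTail_eq]
  linarith [Finset.sum_nonneg fun i (_ : i ∈ Finset.range j) ↦ poissonProb_nonneg hl i]

lemma poissonCDF_nonneg (hl : 0 ≤ l) (k : ℕ) : 0 ≤ poissonCDF l k :=
  Finset.sum_nonneg fun j _ ↦ poissonProb_nonneg hl j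

lemma poissonCDF_le_one (hl : 0 ≤ l) (k : ℕ) : poissonCDF l k ≤ 1 := by
  linarith [poissonTail_succ l k, poissonTail_nonneg hl (k + 1)]

lemma strictMonoOn_poissonTail_succ (k : ℕ) : StrictMonoOn (poissonTail · (k + 1)) (Ici 0) :=
  fun l hl m hm hlm ↦ by
    simp only [poissonTail_succ]
    linarith [strictAntiOn_poissonCDF k hl hm hlm]

lemma monotoneOn_poissonTail : ∀ j : ℕ, MonotoneOn (poissonTail · j) (Ici 0)
  | 0 => fun l _ m _ _ ↦ by simp [poissonTail_eq]
  | k + 1 => (strictMonoOn_poissonTail_succ k).monotoneOn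

end Poisson

section Comparison

variable {x : ℝ}

lemma summable_poissonProb_mul_poissonTail (hx : 0 ≤ x) {l : ℝ} (hl : 0 ≤ l) :
    Summable fun j ↦ poissonProb x j * poissonTail l j :=
  summable_poissonProb_mul hx (poissonTail_nonneg hl) (poissonTail_le_one hl)

lemma monotoneOn_tsum_poissonProb_mul_poissonTail (hx : 0 ≤ x) :
    MonotoneOn (fun l ↦ ∑' j, poissonProb x j * poissonTail l j) (Ici 0) :=
  fun _ hl _ hm hlm ↦ (summable_poissonProb_mul_poissonTail hx hl).tsum_le_tsum
    (fun j ↦ mul_le_mul_of_nonneg_left (monotoneOn_poissonTail j hl hm hlm)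
      (poissonProb_nonneg hx j))
    (summable_poissonProb_mul_poissonTail hx hm)

lemma strictMonoOn_tsum_poissonProb_mul_poissonTail (hx : 0 < x) :
    StrictMonoOn (fun l ↦ ∑' j, poissonProb x j * poissonTail l j) (Ici 0) :=
  fun _ hl _ hm hlm ↦ Summable.tsum_lt_tsum (i := 1)
    (fun j ↦ mul_le_mul_of_nonneg_left (monotoneOn_poissonTail j hl hm hlm.le)
      (poissonProb_nonneg hx.le j))
    (mul_lt_mul_of_pos_left (strictMonoOn_poissonTail_succ 0 hl hm hlm) (poissonProb_pos hx 1))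
    (summable_poissonProb_mul_poissonTail hx.le hl)
    (summable_poissonProb_mul_poissonTail hx.le hm)

end Comparison

section Marcum

variable {b : ℝ}

lemma hasDerivAt_neg_poissonCDF_sq_div_two (k : ℕ) (t : ℝ) :
    HasDerivAt (fun t ↦ -poissonCDF (t ^ 2 / 2) k) (t * poissonProb (t ^ 2 / 2) k) t := by
  have hsq : HasDerivAt (fun t : ℝ ↦ t ^ 2 / 2) t t := by
    simpa using (hasDerivAt_pow 2 t).div_const 2
  refine ((hasDerivAt_poissonCDF k (t ^ 2 / 2)).comp t hsq).fun_neg.congr_deriv ?_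
  ring

lemma tendsto_neg_poissonCDF_sq_div_two (k : ℕ) :
    Tendsto (fun t ↦ -poissonCDF (t ^ 2 / 2) k) atTop (𝓝 0) := by
  have hsq : Tendsto (fun t : ℝ ↦ t ^ 2 / 2) atTop atTop :=
    (tendsto_pow_atTop two_ne_zero).atTop_div_const two_pos
  simpa using ((tendsto_poissonCDF_atTop k).comp hsq).neg

lemma integrableOn_mul_poissonProb_sq_div_two (hb : 0 ≤ b) (k : ℕ) :
    IntegrableOn (fun t ↦ t * poissonProb (t ^ 2 / 2) k) (Ioi b) :=
  integrableOn_Ioi_deriv_of_nonneg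
    (hasDerivAt_neg_poissonCDF_sq_div_two k b).continuousAt.continuousWithinAt
    (fun t _ ↦ hasDerivAt_neg_poissonCDF_sq_div_two k t)
    (fun t ht ↦ mul_nonneg (hb.trans ht.le) (poissonProb_nonneg (by positivity) k))
    (tendsto_neg_poissonCDF_sq_div_two k)

lemma integral_mul_poissonProb_sq_div_two (hb : 0 ≤ b) (k : ℕ) :
    ∫ t in Ioi b, t * poissonProb (t ^ 2 / 2) k = poissonCDF (b ^ 2 / 2) k := by
  rw [integral_Ioi_of_hasDerivAt_of_tendsto
    (hasDerivAt_neg_poissonCDF_sq_div_two k b).continuousAt.continuousWithinAt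
    (fun t _ ↦ hasDerivAt_neg_poissonCDF_sq_div_two k t)
    (integrableOn_mul_poissonProb_sq_div_two hb k) (tendsto_neg_poissonCDF_sq_div_two k)]
  ring

lemma poissonProb_mul_mul_poissonProb (a t : ℝ) (k : ℕ) :
    poissonProb (a ^ 2 / 2) k * (t * poissonProb (t ^ 2 / 2) k) =
      t * exp (-(t ^ 2 + a ^ 2) / 2) * (((a * t) ^ 2 / 4) ^ k / (k.factorial : ℝ) ^ 2) := by
  rw [poissonProb, poissonProb, show -(t ^ 2 + a ^ 2) / 2 = -(a ^ 2 / 2) + -(t ^ 2 / 2) by ring,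
    exp_add, show (a * t) ^ 2 / 4 = a ^ 2 / 2 * (t ^ 2 / 2) by ring, mul_pow]
  ring

lemma marcumQ1_eq_tsum_poissonProb_mul_poissonCDF (a : ℝ) (hb : 0 ≤ b) :
    marcumQ1 a b = ∑' k, poissonProb (a ^ 2 / 2) k * poissonCDF (b ^ 2 / 2) k := by
  have hint (k : ℕ) : ∫ t in Ioi b, poissonProb (a ^ 2 / 2) k * (t * poissonProb (t ^ 2 / 2) k)
      = poissonProb (a ^ 2 / 2) k * poissonCDF (b ^ 2 / 2) k := by
    rw [integral_const_mul, integral_mul_poissonProb_sq_div_two hb]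
  have hnorm (k : ℕ) :
      ∫ t in Ioi b, ‖poissonProb (a ^ 2 / 2) k * (t * poissonProb (t ^ 2 / 2) k)‖ =
        poissonProb (a ^ 2 / 2) k * poissonCDF (b ^ 2 / 2) k := by
    rw [← hint]
    refine setIntegral_congr_fun measurableSet_Ioi fun t ht ↦ norm_of_nonneg ?_
    have : 0 ≤ t := hb.trans ht.le
    unfold poissonProb
    positivity
  have hsumm : Summable fun k ↦
      ∫ t in Ioi b, ‖poissonProb (a ^ 2 / 2) k * (t * poissonProb (t ^ 2 / 2) k)‖ := by
    simp_rw [hnorm]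
    exact summable_poissonProb_mul (by positivity) (poissonCDF_nonneg (by positivity))
      (poissonCDF_le_one (by positivity))
  have hsum := integral_tsum_of_summable_integral_norm
    (fun k ↦ (integrableOn_mul_poissonProb_sq_div_two hb k).const_mul _) hsumm
  simp_rw [hint, poissonProb_mul_mul_poissonProb, tsum_mul_left] at hsum
  simp_rw [marcumQ1, besselI0]
  exact hsum.symm

lemma marcumQ1_eq_tsum_poissonProb_mul_poissonTail (a : ℝ) (hb : 0 ≤ b) :
    marcumQ1 a b = ∑' j, poissonProb (b ^ 2 / 2) j * poissonTail (a ^ 2 / 2) j := by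
  rw [marcumQ1_eq_tsum_poissonProb_mul_poissonCDF a hb]
  exact tsum_mul_sum_range_eq_tsum_mul_tsum_add (poissonProb_nonneg (by positivity))
    (poissonProb_nonneg (by positivity)) (hasSum_poissonProb _).summable
    (hasSum_poissonProb _).summable

end Marcum

/-- Marcum Q is monotonically increasing in its first argument, strictly so for b > 0. -/
theorem marcumQ1_mono_first (b : ℝ) (hb : 0 ≤ b) (a₁ a₂ : ℝ)
    (ha₁ : 0 ≤ a₁) (h : a₁ < a₂) :
    marcumQ1 a₁ b ≤ marcumQ1 a₂ b ∧ (0 < b → marcumQ1 a₁ b < marcumQ1 a₂ b) := by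
  have h₁ : a₁ ^ 2 / 2 ∈ Ici (0 : ℝ) := mem_Ici.2 (by positivity)
  have h₂ : a₂ ^ 2 / 2 ∈ Ici (0 : ℝ) := mem_Ici.2 (by positivity)
  have h₁₂ : a₁ ^ 2 / 2 < a₂ ^ 2 / 2 := by nlinarith
  rw [marcumQ1_eq_tsum_poissonProb_mul_poissonTail a₁ hb,
    marcumQ1_eq_tsum_poissonProb_mul_poissonTail a₂ hb]
  exact ⟨monotoneOn_tsum_poissonProb_mul_poissonTail (by positivity) h₁ h₂ h₁₂.le,
    fun hb' ↦ strictMonoOn_tsum_poissonProb_mul_poissonTail (by positivity) h₁ h₂ h₁₂⟩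
end

section
/- The function f(x,y) can be written in the single-integral forms f(x,y) = 1 − ∫_0^∞ g_x(η)·Q₁(√y, √η) dη and also f(x,y) = ∫_0^∞ g_y(η)·Q₁(√x, √η) dη, where Q₁ is the first-order Marcum Q-function. -/
open MeasureTheory Real Set

/-! The density `g x` is a Poisson(x/2)-mixture of Gamma(k + 1, 1/2) densities (expand
`besselI0` termwise), so it has total mass one, and the substitution `η = t²` identifies its
tail `∫_{η > c} g x` with `marcumQ1 (√x) (√c)`. Writing the inner integral of `fcomp` as one
minus such a tail gives the first form; exchanging the order of integration over `{η > ν > 0}`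
gives the second. -/

open scoped Nat

theorem integral_pow_mul_exp_neg_mul_Ioi (k : ℕ) {r : ℝ} (hr : 0 < r) :
    ∫ t in Ioi (0 : ℝ), t ^ k * Real.exp (-(r * t)) = k ! / r ^ (k + 1) := by
  have h := Real.integral_rpow_mul_exp_neg_mul_Ioi (a := k + 1) (by positivity) hr
  rw [add_sub_cancel_right, Real.Gamma_nat_eq_factorial, ← Nat.cast_succ, Real.rpow_natCast,
    div_pow, one_pow, one_div_mul_eq_div] at h
  rw [← h]
  exact setIntegral_congr_fun measurableSet_Ioi fun t _ => by rw [Real.rpow_natCast]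

theorem integrableOn_pow_mul_exp_neg_mul_Ioi (k : ℕ) {r : ℝ} (hr : 0 < r) :
    IntegrableOn (fun t : ℝ => t ^ k * Real.exp (-(r * t))) (Ioi 0) :=
  Integrable.of_integral_ne_zero <| by
    rw [integral_pow_mul_exp_neg_mul_Ioi k hr]
    positivity

theorem hasSum_integral_of_nonneg {α ι : Type*} [MeasurableSpace α] [Countable ι]
    {μ : Measure α} {F : ι → α → ℝ} {f : α → ℝ}
    (hF : ∀ᵐ a ∂μ, HasSum (F · a) (f a)) (hF_nonneg : ∀ i, 0 ≤ᵐ[μ] F i)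
    (hF_int : ∀ i, Integrable (F i) μ) (hF_sum : Summable fun i => ∫ a, F i a ∂μ) :
    HasSum (fun i => ∫ a, F i a ∂μ) (∫ a, f a ∂μ) := by
  have h_norm (i : ι) : ∫ a, ‖F i a‖ ∂μ = ∫ a, F i a ∂μ :=
    integral_congr_ae <| (hF_nonneg i).mono fun a ha => Real.norm_of_nonneg ha
  have h := hasSum_integral_of_summable_integral_norm hF_int (by simpa only [h_norm] using hF_sum)
  rwa [integral_congr_ae (hF.mono fun a ha => ha.tsum_eq)] at h

section Triangle

variable {α : Type*} [MeasurableSpace α] [TopologicalSpace α] [LinearOrder α]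
  [OrderClosedTopology α] [SecondCountableTopology α] [OpensMeasurableSpace α]
  {μ ν : Measure α} [SFinite μ] [SFinite ν]

theorem integral_mul_setIntegral_Iic_swap {f g : α → ℝ} (hf : Integrable f μ)
    (hg : Integrable g ν) :
    ∫ a, f a * (∫ b in Iic a, g b ∂ν) ∂μ =
      ∫ b, g b * (∫ a in Ici b, f a ∂μ) ∂ν := by
  set F : α → α → ℝ := fun a b =>
    {p : α × α | p.2 ≤ p.1}.indicator (fun p => f p.1 * g p.2) (a, b)
  have hF : Integrable (Function.uncurry F) (μ.prod ν) :=
    (hf.mul_prod hg).indicator (measurableSet_le measurable_snd measurable_fst)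
  have h_left (a : α) : ∫ b, F a b ∂ν = f a * ∫ b in Iic a, g b ∂ν := by
    rw [← integral_const_mul, ← integral_indicator measurableSet_Iic]
    -- both integrands unfold to `if b ≤ a then f a * g b else 0`
    rfl
  have h_right (b : α) : ∫ a, F a b ∂μ = g b * ∫ a in Ici b, f a ∂μ := by
    rw [← integral_const_mul, ← integral_indicator measurableSet_Ici]
    congr 1 with a
    by_cases hb : b ≤ a <;> simp [F, hb, mul_comm]
  simpa only [h_left, h_right] using integral_integral_swap hF

end Triangle

theorem setIntegral_Ioi_mul_intervalIntegral_swap {f g : ℝ → ℝ} {c : ℝ}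
    (hf : IntegrableOn f (Ioi c)) (hg : IntegrableOn g (Ioi c)) :
    ∫ a in Ioi c, f a * (∫ b in c..a, g b) = ∫ b in Ioi c, g b * (∫ a in Ioi b, f a) := by
  calc ∫ a in Ioi c, f a * (∫ b in c..a, g b)
      = ∫ a in Ioi c, f a * ∫ b in Iic a, g b ∂volume.restrict (Ioi c) :=
        setIntegral_congr_fun measurableSet_Ioi fun a ha => by
          rw [Measure.restrict_restrict measurableSet_Iic, Iic_inter_Ioi,
            intervalIntegral.integral_of_le (le_of_lt ha)]
    _ = ∫ b in Ioi c, g b * ∫ a in Ici b, f a ∂volume.restrict (Ioi c) :=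
        integral_mul_setIntegral_Iic_swap hf hg
    _ = ∫ b in Ioi c, g b * (∫ a in Ioi b, f a) :=
        setIntegral_congr_fun measurableSet_Ioi fun b hb => by
          rw [Measure.restrict_restrict measurableSet_Ici,
            inter_eq_left.2 (Ici_subset_Ioi.2 hb), integral_Ici_eq_integral_Ioi]

theorem image_sq_Ioi_sqrt {c : ℝ} (hc : 0 ≤ c) :
    (fun t : ℝ => t ^ 2) '' Ioi (Real.sqrt c) = Ioi c := by
  ext η
  constructor
  · rintro ⟨t, ht, rfl⟩
    exact (Real.sqrt_lt' ((Real.sqrt_nonneg c).trans_lt ht)).1 ht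
  · intro hη
    exact ⟨Real.sqrt η, Real.sqrt_lt_sqrt hc hη, Real.sq_sqrt (hc.trans (le_of_lt hη))⟩

theorem hasSum_besselI0 (z : ℝ) :
    HasSum (fun k : ℕ => (z ^ 2 / 4) ^ k / (k ! : ℝ) ^ 2) (besselI0 z) := by
  refine (Summable.of_nonneg_of_le (fun k => by positivity) (fun k => ?_)
    (Real.summable_pow_div_factorial (z ^ 2 / 4))).hasSum
  have : (1 : ℝ) ≤ k ! := mod_cast k.factorial_pos
  gcongr
  nlinarith

theorem besselI0_nonneg (z : ℝ) : 0 ≤ besselI0 z :=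
  (hasSum_besselI0 z).nonneg fun k => by positivity

theorem besselI0_le_exp {z : ℝ} (hz : 0 ≤ z) : besselI0 z ≤ Real.exp z := by
  have hexp := (NormedSpace.expSeries_div_hasSum_exp (z / 2)).mul_right (Real.exp (z / 2))
  rw [← Real.exp_eq_exp_ℝ, ← Real.exp_add, add_halves] at hexp
  refine hasSum_le (fun k => ?_) (hasSum_besselI0 z) hexp
  -- each term is the square of a term of the series of `exp (z / 2)`
  have hterm : (z ^ 2 / 4) ^ k / (k ! : ℝ) ^ 2 = ((z / 2) ^ k / k !) ^ 2 := by
    rw [div_pow ((z / 2) ^ k), ← pow_mul, mul_comm k 2, pow_mul, div_pow z]; norm_num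
  rw [hterm, sq]
  exact mul_le_mul_of_nonneg_left (Real.pow_div_factorial_le_exp _ (by positivity) k)
    (by positivity)

theorem measurable_besselI0 : Measurable besselI0 :=
  measurable_of_tendsto_metrizable
    (fun n => Finset.measurable_sum (Finset.range n) fun k _ => by fun_prop)
    (tendsto_pi_nhds.2 fun z => (hasSum_besselI0 z).tendsto_sum_nat)

theorem g_nonneg (x η : ℝ) : 0 ≤ g x η := by
  have := besselI0_nonneg (Real.sqrt (x * η))
  unfold g
  positivity

theorem measurable_g (x : ℝ) : Measurable (g x) := by
  have : Measurable fun η => besselI0 (Real.sqrt (x * η)) :=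
    measurable_besselI0.comp (by fun_prop)
  unfold g
  fun_prop

theorem g_le_exp {x η : ℝ} (hx : 0 ≤ x) (hη : 0 ≤ η) :
    g x η ≤ Real.exp (x / 2) / 2 * Real.exp (-(1 / 4) * η) := by
  have hsqrt : Real.sqrt (x * η) ≤ x + η / 4 :=
    Real.sqrt_le_iff.2 ⟨by positivity, by nlinarith [sq_nonneg (x - η / 4)]⟩
  calc g x η ≤ 1 / 2 * Real.exp (-(x + η) / 2) * Real.exp (x + η / 4) := by
        unfold g
        gcongr
        exact (besselI0_le_exp (Real.sqrt_nonneg _)).trans (Real.exp_le_exp.2 hsqrt)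
    _ = 1 / 2 * Real.exp (x / 2 + -(1 / 4) * η) := by
        rw [mul_assoc, ← Real.exp_add]
        ring_nf
    _ = Real.exp (x / 2) / 2 * Real.exp (-(1 / 4) * η) := by
        rw [Real.exp_add]
        ring

theorem integrableOn_g {x : ℝ} (hx : 0 ≤ x) : IntegrableOn (g x) (Ioi 0) := by
  refine Integrable.mono' ((exp_neg_integrableOn_Ioi 0 (by norm_num : (0 : ℝ) < 1 / 4)).const_mul
    (Real.exp (x / 2) / 2)) (measurable_g x).aestronglyMeasurable ?_
  filter_upwards [ae_restrict_mem measurableSet_Ioi] with η hη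
  rw [Real.norm_of_nonneg (g_nonneg x η)]
  exact g_le_exp hx (le_of_lt hη)

theorem hasSum_g {x η : ℝ} (hx : 0 ≤ x) (hη : 0 ≤ η) :
    HasSum (fun k : ℕ => Real.exp (-(x / 2)) * ((x / 2) ^ k / k !) *
      (η ^ k * Real.exp (-(1 / 2 * η)) / (2 ^ (k + 1) * k !))) (g x η) := by
  refine ((hasSum_besselI0 (Real.sqrt (x * η))).mul_left
    (1 / 2 * Real.exp (-(x + η) / 2))).congr_fun fun k => ?_
  rw [Real.sq_sqrt (mul_nonneg hx hη), show x * η / 4 = x / 2 * η / 2 by ring,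
    div_pow (x / 2 * η), mul_pow, show -(x + η) / 2 = -(x / 2) + -(1 / 2 * η) by ring,
    Real.exp_add]
  field_simp
  ring

theorem integral_Ioi_zero_g_eq_one {x : ℝ} (hx : 0 ≤ x) : ∫ η in Ioi 0, g x η = 1 := by
  set w : ℕ → ℝ := fun k => Real.exp (-(x / 2)) * ((x / 2) ^ k / k !)
  set F : ℕ → ℝ → ℝ := fun k η =>
    w k * (η ^ k * Real.exp (-(1 / 2 * η)) / (2 ^ (k + 1) * k !))
  have h_term (k : ℕ) : ∫ η in Ioi 0, F k η = w k := by
    rw [integral_const_mul, integral_div, integral_pow_mul_exp_neg_mul_Ioi k one_half_pos,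
      one_div_pow]
    field_simp
  have h_sum : HasSum (fun k => ∫ η in Ioi 0, F k η) 1 := by
    have := (NormedSpace.expSeries_div_hasSum_exp (x / 2)).mul_left (Real.exp (-(x / 2)))
    rw [← Real.exp_eq_exp_ℝ, ← Real.exp_add, neg_add_cancel, Real.exp_zero] at this
    simpa only [h_term] using this
  refine (hasSum_integral_of_nonneg ?_ (fun k => ?_) (fun k => ?_) h_sum.summable).unique h_sum
  · filter_upwards [ae_restrict_mem measurableSet_Ioi] with η hη using hasSum_g hx (le_of_lt hη)
  · filter_upwards [ae_restrict_mem measurableSet_Ioi] with η hη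
    have : 0 ≤ η := le_of_lt hη
    positivity
  · exact ((integrableOn_pow_mul_exp_neg_mul_Ioi k one_half_pos).div_const _).const_mul (w k)

theorem integral_Ioi_g_eq_marcumQ1 {x c : ℝ} (hx : 0 ≤ x) (hc : 0 ≤ c) :
    ∫ η in Ioi c, g x η = marcumQ1 (Real.sqrt x) (Real.sqrt c) := by
  have h_inj : InjOn (fun t : ℝ => t ^ 2) (Ioi (Real.sqrt c)) :=
    (pow_left_strictMonoOn₀ two_ne_zero).injOn.mono fun t ht =>
      (Real.sqrt_nonneg c).trans (le_of_lt ht)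
  rw [← image_sq_Ioi_sqrt hc, integral_image_eq_integral_abs_deriv_smul measurableSet_Ioi
    (fun t _ => (hasDerivAt_pow 2 t).hasDerivWithinAt) h_inj, marcumQ1]
  refine setIntegral_congr_fun measurableSet_Ioi fun t ht => ?_
  have ht₀ : 0 < t := (Real.sqrt_nonneg c).trans_lt ht
  rw [g, Real.sqrt_mul hx, Real.sqrt_sq ht₀.le, Real.sq_sqrt hx, smul_eq_mul,
    abs_of_pos (by positivity)]
  ring_nf

theorem marcumQ1_sqrt_nonneg {x η : ℝ} (hx : 0 ≤ x) (hη : 0 ≤ η) :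
    0 ≤ marcumQ1 (Real.sqrt x) (Real.sqrt η) := by
  rw [← integral_Ioi_g_eq_marcumQ1 hx hη]
  exact setIntegral_nonneg measurableSet_Ioi fun ν _ => g_nonneg x ν

theorem antitoneOn_marcumQ1_sqrt {x : ℝ} (hx : 0 ≤ x) :
    AntitoneOn (fun η => marcumQ1 (Real.sqrt x) (Real.sqrt η)) (Ici 0) := by
  intro η₁ hη₁ η₂ hη₂ h
  simp only
  rw [← integral_Ioi_g_eq_marcumQ1 hx hη₁, ← integral_Ioi_g_eq_marcumQ1 hx hη₂]
  exact setIntegral_mono_set ((integrableOn_g hx).mono_set (Ioi_subset_Ioi hη₁))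
    (Filter.Eventually.of_forall fun ν => g_nonneg x ν) (Ioi_subset_Ioi h).eventuallyLE

theorem marcumQ1_sqrt_le_one {x η : ℝ} (hx : 0 ≤ x) (hη : 0 ≤ η) :
    marcumQ1 (Real.sqrt x) (Real.sqrt η) ≤ 1 := by
  have h : marcumQ1 (Real.sqrt x) (Real.sqrt η) ≤ marcumQ1 (Real.sqrt x) (Real.sqrt 0) :=
    antitoneOn_marcumQ1_sqrt hx self_mem_Ici hη hη
  rwa [← integral_Ioi_g_eq_marcumQ1 hx le_rfl, integral_Ioi_zero_g_eq_one hx] at h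

theorem intervalIntegral_g_eq_one_sub_marcumQ1 {y η : ℝ} (hy : 0 ≤ y) (hη : 0 ≤ η) :
    ∫ ν in (0 : ℝ)..η, g y ν = 1 - marcumQ1 (Real.sqrt y) (Real.sqrt η) := by
  rw [intervalIntegral.integral_of_le hη, ← integral_Ioi_zero_g_eq_one hy,
    ← integral_Ioi_g_eq_marcumQ1 hy hη,
    ← Ioc_union_Ioi_eq_Ioi hη, setIntegral_union (Ioc_disjoint_Ioi le_rfl) measurableSet_Ioi
      ((integrableOn_g hy).mono_set Ioc_subset_Ioi_self)
      ((integrableOn_g hy).mono_set (Ioi_subset_Ioi hη))]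
  ring

theorem integrableOn_g_mul_marcumQ1_sqrt {x y : ℝ} (hx : 0 ≤ x) (hy : 0 ≤ y) :
    IntegrableOn (fun η => g x η * marcumQ1 (Real.sqrt y) (Real.sqrt η)) (Ioi 0) := by
  refine (integrableOn_g hx).mul_bdd (c := 1) ?_ ?_
  · exact ((antitoneOn_marcumQ1_sqrt hy).mono Ioi_subset_Ici_self
      |> aemeasurable_restrict_of_antitoneOn measurableSet_Ioi).aestronglyMeasurable
  · filter_upwards [ae_restrict_mem measurableSet_Ioi] with η hη
    rw [Real.norm_of_nonneg (marcumQ1_sqrt_nonneg hy (le_of_lt hη))]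
    exact marcumQ1_sqrt_le_one hy (le_of_lt hη)

/-- Single-integral forms of f(x,y) via the Marcum Q-function. -/
theorem fcomp_single_integral (x y : ℝ) (hx : 0 ≤ x) (hy : 0 ≤ y) :
    fcomp x y = 1 - ∫ η in Set.Ioi (0 : ℝ), g x η * marcumQ1 (Real.sqrt y) (Real.sqrt η) ∧
    fcomp x y = ∫ η in Set.Ioi (0 : ℝ), g y η * marcumQ1 (Real.sqrt x) (Real.sqrt η) := by
  constructor
  · have h : fcomp x y = ∫ η in Ioi 0, (g x η - g x η * marcumQ1 (Real.sqrt y) (Real.sqrt η)) :=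
      setIntegral_congr_fun measurableSet_Ioi fun η hη => by
        rw [intervalIntegral_g_eq_one_sub_marcumQ1 hy (le_of_lt hη), mul_one_sub]
    rw [h, integral_sub (integrableOn_g hx) (integrableOn_g_mul_marcumQ1_sqrt hx hy),
      integral_Ioi_zero_g_eq_one hx]
  · rw [fcomp, setIntegral_Ioi_mul_intervalIntegral_swap (integrableOn_g hx) (integrableOn_g hy)]
    exact setIntegral_congr_fun measurableSet_Ioi fun ν hν => by
      rw [integral_Ioi_g_eq_marcumQ1 hx (le_of_lt hν)]
end
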